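/- For the acceptance probability α(x,y) = min{1, (p(x,y)/(1-p(x,y))) · (q(y,x)/q(x,y))} with p(x,y) ∈ (0,1) satisfying p(x,y) + p(y,x) = 1, the resulting transition kernel P(x,y) = q(x,y)α(x,y) for x ≠ y need not be reversible: there exist a three-state example of p and symmetric q for which π(x)P(x,y) ≠ π(y)P(y,x) for the stationary distribution π of P. -/

import Mathlib

open Finset

/-- The MCMC-BO acceptance probability built from pairwise winning probabilities `p`. -/
noncomputable def mcmcAccept (p q : Fin 3 → Fin 3 → ℝ) (x y : Fin 3) : ℝ :=
  min 1 (p x y * q y x / (p y x * q x y))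

/-- The MCMC-BO transition kernel: off-diagonal moves are proposed by `q` and accepted
with probability `mcmcAccept`, and the diagonal absorbs the remaining mass. -/
noncomputable def mcmcKernel (p q : Fin 3 → Fin 3 → ℝ) (x y : Fin 3) : ℝ :=
  if x = y then 1 - ∑ z ∈ Finset.univ.erase x, q x z * mcmcAccept p q x z
  else q x y * mcmcAccept p q x y

/-!
Take the cyclic preferences `0 ≺ 1 ≺ 2 ≺ 0`, each won with probability `2/3`, and uniform
proposals. The kernel is then the circulant matrix with rows `(1/2, 1/3, 1/6)` shifted
cyclically. Being circulant it is doubly stochastic, so the uniform distribution is stationary;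
but it is not symmetric, and for a uniform `π` detailed balance is exactly symmetry of the kernel.
-/

lemma mcmcAccept_const (p : Fin 3 → Fin 3 → ℝ) {c : ℝ} (hc : c ≠ 0) (x y : Fin 3) :
    mcmcAccept p (fun _ _ => c) x y = min 1 (p x y / p y x) := by
  rw [mcmcAccept, mul_div_mul_right _ _ hc]

lemma sum_const_mul_eq_of_sum_eq_one {ι : Type*} [Fintype ι] {K : ι → ι → ℝ}
    (hK : ∀ y, ∑ x, K x y = 1) (c : ℝ) (y : ι) : ∑ x, c * K x y = c := by
  rw [← Finset.mul_sum, hK, mul_one]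

noncomputable def cyclicWinProb : Fin 3 → Fin 3 → ℝ :=
  !![1/2, 2/3, 1/3; 1/3, 1/2, 2/3; 2/3, 1/3, 1/2]

lemma cyclicWinProb_mem_Ioo (x y : Fin 3) : cyclicWinProb x y ∈ Set.Ioo (0 : ℝ) 1 := by
  fin_cases x <;> fin_cases y <;> norm_num [cyclicWinProb]

lemma cyclicWinProb_add_swap (x y : Fin 3) : cyclicWinProb x y + cyclicWinProb y x = 1 := by
  fin_cases x <;> fin_cases y <;> norm_num [cyclicWinProb]

noncomputable def cyclicKernel : Fin 3 → Fin 3 → ℝ :=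
  !![1/2, 1/3, 1/6; 1/6, 1/2, 1/3; 1/3, 1/6, 1/2]

lemma mcmcKernel_cyclicWinProb :
    mcmcKernel cyclicWinProb (fun _ _ => 1/3) = cyclicKernel := by
  ext x y
  simp only [mcmcKernel, mcmcAccept_const _ (by norm_num : (1/3 : ℝ) ≠ 0)]
  fin_cases x <;> fin_cases y <;>
    simp [Finset.sum_erase_eq_sub, Fin.sum_univ_three, cyclicWinProb, cyclicKernel, min_def] <;> norm_num

lemma cyclicKernel_sum_fst (y : Fin 3) : ∑ x, cyclicKernel x y = 1 := by
  fin_cases y <;> simp [Fin.sum_univ_three, cyclicKernel] <;> norm_num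

lemma cyclicKernel_ne_swap : cyclicKernel 0 1 ≠ cyclicKernel 1 0 := by
  norm_num [cyclicKernel]

/-- The transition kernel induced by the acceptance probability
`α(x,y) = min{1, (p(x,y)/(1-p(x,y)))·(q(y,x)/q(x,y))}` need not be reversible:
there is a three-state example with symmetric proposal `q` and winning probabilities
`p` for which detailed balance fails for the stationary distribution of the kernel. -/
theorem stmt_6 :
    ∃ (p q : Fin 3 → Fin 3 → ℝ),
      (∀ x y, 0 < q x y) ∧ (∀ x y, q x y = q y x) ∧
      (∀ x y, x ≠ y → p x y ∈ Set.Ioo (0 : ℝ) 1 ∧ p x y + p y x = 1) ∧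
      ∃ π' : Fin 3 → ℝ,
        (∀ x, 0 ≤ π' x) ∧ (∑ x, π' x = 1) ∧
        (∀ y, ∑ x, π' x * mcmcKernel p q x y = π' y) ∧
        ∃ x y, π' x * mcmcKernel p q x y ≠ π' y * mcmcKernel p q y x := by
  refine ⟨cyclicWinProb, fun _ _ => 1/3, fun _ _ => by norm_num, fun _ _ => rfl,
    fun x y _ => ⟨cyclicWinProb_mem_Ioo x y, cyclicWinProb_add_swap x y⟩,
    fun _ => 1/3, fun _ => by norm_num, by norm_num, ?_, 0, 1, ?_⟩
  all_goals rw [mcmcKernel_cyclicWinProb]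
  · exact sum_const_mul_eq_of_sum_eq_one cyclicKernel_sum_fst _
  · simpa using cyclicKernel_ne_swap
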